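/- Let q be real with |q| > 1/2 and q ≠ 1, and set a = 1/(2q). For every positive integer n, with k = ⌊log₂ n⌋ and u = log₂ n − k, it holds that (1/n)·S_q(n) = (q/2)·((1 − q^{k+1})/(1 − q) − q^k · 2^{1−u} · T_a(2^{u−1})). -/

import Mathlib

open scoped BigOperators

/-- distance from `x` to the nearest integer -/
noncomputable def tau (x : ℝ) : ℝ := |x - round x|

/-- q-weighted binary digit sum: `s_q(n) = Σ ω_i q^(i+1)` -/
noncomputable def sdigq (q : ℝ) (n : ℕ) : ℝ :=
  ∑ i ∈ Finset.range n, if n.testBit i then q ^ (i + 1) else 0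

/-- `S_q(n) = Σ_{k<n} s_q(k)` -/
noncomputable def Sdigq (q : ℝ) (n : ℕ) : ℝ := ∑ k ∈ Finset.range n, sdigq q k

/-- Takagi–Landsberg function -/
noncomputable def Ta (a x : ℝ) : ℝ := ∑' n : ℕ, a ^ n * tau (2 ^ n * x)

/-! Among `0, …, n - 1` exactly `n / 2 - 2 ^ i τ(n / 2 ^ (i + 1))` numbers have bit `i` set: the
increment of this expression from `m` to `m + 1` is bit `i` of `m`. Weighting by `q ^ (i + 1)` and
summing over `i ≤ k` gives `S_q(n)`. On the other side, at the dyadic point `n / 2 ^ (k + 1)` the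
series `T_a` has only `k + 1` nonzero terms, which read backwards are the same `τ(n / 2 ^ (i + 1))`,
and `a = 1 / (2q)` turns their weights into the `q ^ (i + 1) 2 ^ i` of the counting formula. -/

open Finset

lemma tau_add_natCast (x : ℝ) (m : ℕ) : tau (x + m) = tau x := by
  rw [tau, tau, round_add_natCast]
  push_cast
  ring_nf

lemma tau_natCast (m : ℕ) : tau m = 0 := by
  simp [tau]

lemma tau_of_le_half {x : ℝ} (h0 : 0 ≤ x) (h : x ≤ 1 / 2) : tau x = x := by
  rcases h.lt_or_eq with h | rfl
  · rw [tau, round_eq_zero_iff.2 ⟨by linarith, h⟩, Int.cast_zero, sub_zero, abs_of_nonneg h0]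
  · norm_num [tau, round_eq]

lemma tau_of_half_le {x : ℝ} (h : 1 / 2 ≤ x) (h1 : x ≤ 1) : tau x = 1 - x := by
  have : round x = 1 := by
    rw [round_eq, Int.floor_eq_iff]
    constructor <;> push_cast <;> linarith
  rw [tau, this, Int.cast_one, abs_of_nonpos (by linarith)]
  ring

lemma tau_add_mul_div (x : ℝ) {p : ℝ} (m : ℕ) (hp : p ≠ 0) :
    tau ((x + p * m) / p) = tau (x / p) := by
  rw [add_div, mul_div_cancel_left₀ _ hp, tau_add_natCast]

lemma two_pow_mul_tau_succ_sub (n i : ℕ) :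
    (2 : ℝ) ^ i * (tau ((n + 1) / 2 ^ (i + 1)) - tau (n / 2 ^ (i + 1)))
      = if n.testBit i then -1 / 2 else 1 / 2 := by
  set r := n % 2 ^ (i + 1)
  have hr : r < 2 ^ (i + 1) := Nat.mod_lt _ (by positivity)
  have hn : (n : ℝ) = r + 2 ^ (i + 1) * (n / 2 ^ (i + 1) : ℕ) := by
    exact_mod_cast (Nat.mod_add_div n (2 ^ (i + 1))).symm
  have hbit : n.testBit i = r.testBit i := by simp [r, Nat.testBit_mod_two_pow]
  have hP : (0 : ℝ) < 2 ^ (i + 1) := by positivity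
  have hrR : (r : ℝ) + 1 ≤ 2 ^ (i + 1) := by exact_mod_cast hr
  rw [hn, add_right_comm, tau_add_mul_div _ _ hP.ne', tau_add_mul_div _ _ hP.ne', hbit, pow_succ]
  rw [pow_succ] at hP hrR
  -- bit `i` of `r` is clear exactly when `r / 2 ^ (i + 1)` and its successor lie where `τ` rises
  cases hb : r.testBit i
  · have hlt : r < 2 ^ i := by
      by_contra! h
      simp [Nat.testBit_of_two_pow_le_and_two_pow_add_one_gt h hr] at hb
    have h' : (r : ℝ) + 1 ≤ 2 ^ i := by exact_mod_cast Nat.succ_le_of_lt hlt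
    rw [tau_of_le_half (by positivity) ((div_le_iff₀ hP).2 (by linarith)),
      tau_of_le_half (by positivity) ((div_le_iff₀ hP).2 (by linarith))]
    simp only [Bool.false_eq_true, ↓reduceIte]
    field_simp
    ring
  · have h' : (2 : ℝ) ^ i ≤ r := by exact_mod_cast Nat.ge_two_pow_of_testBit hb
    rw [tau_of_half_le ((le_div_iff₀ hP).2 (by linarith)) ((div_le_one hP).2 (by linarith)),
      tau_of_half_le ((le_div_iff₀ hP).2 (by linarith)) ((div_le_one hP).2 (by linarith))]
    simp only [↓reduceIte]
    field_simp
    ring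

lemma card_filter_testBit_range (i n : ℕ) :
    (#{m ∈ range n | m.testBit i} : ℝ) = n / 2 - 2 ^ i * tau (n / 2 ^ (i + 1)) := by
  induction n with
  | zero => simp [tau]
  | succ n ih =>
    have step := two_pow_mul_tau_succ_sub n i
    rw [range_add_one, filter_insert]
    push_cast
    split_ifs at step ⊢
    · rw [card_insert_of_notMem (by simp), Nat.cast_succ, ih]
      linarith
    · rw [ih]
      linarith

lemma sum_range_ite_testBit_of_lt {M : Type*} [AddCommMonoid M] (f : ℕ → M) {m K L : ℕ}
    (hm : m < 2 ^ K) (hKL : K ≤ L) :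
    ∑ i ∈ range L, (if m.testBit i then f i else 0)
      = ∑ i ∈ range K, (if m.testBit i then f i else 0) := by
  refine (sum_subset (range_subset_range.2 hKL) fun i _ hi => ?_).symm
  have : m < 2 ^ i := hm.trans_le (Nat.pow_le_pow_right two_pos (by simpa using hi))
  simp [Nat.testBit_lt_two_pow this]

lemma sdigq_eq_sum_range (q : ℝ) {m K : ℕ} (hm : m < 2 ^ K) :
    sdigq q m = ∑ i ∈ range K, if m.testBit i then q ^ (i + 1) else 0 := by
  rw [sdigq, ← sum_range_ite_testBit_of_lt _ Nat.lt_two_pow_self (m.le_add_right K),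
    sum_range_ite_testBit_of_lt _ hm (K.le_add_left m)]

lemma Sdigq_eq_sum_tau (q : ℝ) {n K : ℕ} (hn : n ≤ 2 ^ K) :
    Sdigq q n = ∑ i ∈ range K, q ^ (i + 1) * (n / 2 - 2 ^ i * tau (n / 2 ^ (i + 1))) := by
  rw [Sdigq, sum_congr rfl fun m hm => sdigq_eq_sum_range q ((mem_range.1 hm).trans_le hn),
    sum_comm]
  refine sum_congr rfl fun i _ => ?_
  rw [← sum_filter, sum_const, nsmul_eq_mul, card_filter_testBit_range, mul_comm]

lemma Ta_natCast_div_two_pow (a : ℝ) (n K : ℕ) :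
    Ta a (n / 2 ^ K) = ∑ i ∈ range K, a ^ (K - 1 - i) * tau (n / 2 ^ (i + 1)) := by
  rw [Ta, tsum_eq_sum (s := range K), ← sum_range_reflect]
  · refine sum_congr rfl fun i hi => ?_
    obtain ⟨j, rfl⟩ := Nat.exists_eq_add_of_lt (mem_range.1 hi)
    rw [show i + j + 1 - 1 - i = j by omega, show i + j + 1 = j + (i + 1) by ring, pow_add]
    field_simp
  · intro m hm
    obtain ⟨j, rfl⟩ := Nat.exists_eq_add_of_le (not_lt.1 (mem_range.not.1 hm))
    have : (2 : ℝ) ^ (K + j) * (n / 2 ^ K) = (n * 2 ^ j : ℕ) := by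
      push_cast
      field_simp
      ring
    rw [this, tau_natCast, mul_zero]

lemma one_div_mul_Sdigq_eq_of_le_two_pow (q : ℝ) (hq1 : q ≠ 1) {n k : ℕ} (hn : 0 < n)
    (hnk : n ≤ 2 ^ (k + 1)) :
    (1 / (n : ℝ)) * Sdigq q n = (q / 2) * ((1 - q ^ (k + 1)) / (1 - q)
      - q ^ k * (2 ^ (k + 1) / n) * Ta (1 / (2 * q)) (n / 2 ^ (k + 1))) := by
  have hgeom : (1 - q ^ (k + 1)) / (1 - q) = ∑ i ∈ range (k + 1), q ^ i := by
    rw [geom_sum_eq hq1, ← neg_div_neg_eq, neg_sub, neg_sub]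
  rw [Ta_natCast_div_two_pow, Sdigq_eq_sum_tau q hnk, hgeom, mul_sum, mul_sum,
    ← sum_sub_distrib, mul_sum]
  refine sum_congr rfl fun i hi => ?_
  obtain ⟨j, rfl⟩ := Nat.exists_eq_add_of_le (Nat.lt_succ_iff.1 (mem_range.1 hi))
  have hscale : q ^ (i + j + 1) * 2 ^ (i + j) * (1 / (2 * q)) ^ j = q ^ (i + 1) * 2 ^ i := by
    rcases eq_or_ne q 0 with rfl | hq0
    · simp
    · rw [one_div, mul_inv, mul_pow, inv_pow, inv_pow]
      field_simp
      ring
  have hterm : q / 2 * (q ^ (i + j) * (2 ^ (i + j + 1) / n)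
      * ((1 / (2 * q)) ^ j * tau (n / 2 ^ (i + 1))))
      = q ^ (i + 1) * 2 ^ i * tau (n / 2 ^ (i + 1)) / n := by
    rw [← hscale]
    ring
  rw [show i + j + 1 - 1 - i = j by omega, mul_sub (q / 2), hterm]
  field_simp
  ring

theorem generalized_trollope_delange_general (q : ℝ) (hq1 : q ≠ 1)
    (n : ℕ) (hn : 0 < n) :
    (1 / (n : ℝ)) * Sdigq q n =
      (q / 2) * ((1 - q ^ (Nat.log 2 n + 1)) / (1 - q)
        - q ^ Nat.log 2 n * (2 : ℝ) ^ ((1 : ℝ) - (Real.logb 2 n - Nat.log 2 n))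
          * Ta (1/(2*q)) ((2 : ℝ) ^ ((Real.logb 2 n - Nat.log 2 n) - 1))) := by
  set k := Nat.log 2 n
  have hx : (2 : ℝ) ^ ((Real.logb 2 n - k) - 1) = n / 2 ^ (k + 1) := by
    rw [sub_sub, Real.rpow_sub two_pos, Real.rpow_logb two_pos (by norm_num) (by positivity)]
    norm_cast
  have hy : (2 : ℝ) ^ ((1 : ℝ) - (Real.logb 2 n - k)) = 2 ^ (k + 1) / n := by
    rw [show (1 : ℝ) - (Real.logb 2 n - k) = -((Real.logb 2 n - k) - 1) by ring,
      Real.rpow_neg zero_le_two, hx, inv_div]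
  rw [hx, hy]
  exact one_div_mul_Sdigq_eq_of_le_two_pow q hq1 hn (Nat.lt_pow_succ_log_self one_lt_two n).le

theorem generalized_trollope_delange (q : ℝ) (hq : 1/2 < |q|) (hq1 : q ≠ 1)
    (n : ℕ) (hn : 0 < n) :
    (1 / (n : ℝ)) * Sdigq q n =
      (q / 2) * ((1 - q ^ (Nat.log 2 n + 1)) / (1 - q)
        - q ^ Nat.log 2 n * (2 : ℝ) ^ ((1 : ℝ) - (Real.logb 2 n - Nat.log 2 n))
          * Ta (1/(2*q)) ((2 : ℝ) ^ ((Real.logb 2 n - Nat.log 2 n) - 1))) :=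
  generalized_trollope_delange_general q hq1 n hn
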